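/- arXiv:2411.12408 — 4 statements merged into one kernel-verified Lean document; each statement's English description precedes it below -/
import Mathlib

section
/- The polynomial R(u) = 531441 - 3188646u + 8148762u^2 - 11455506u^3 + 9546255u^4 - 4776408u^5 + 1487889u^6 - 406782u^7 + 143856u^8 - 32238u^9 + 1593u^10 - 180u^11 - 4u^12 has no real roots in the open interval (0,1). -/
/-- The polynomial `R(u)` has no real roots in the open interval `(0,1)`. -/
theorem stmt_0 :
    ∀ u : ℝ, 0 < u → u < 1 →
      531441 - 3188646*u + 8148762*u^2 - 11455506*u^3 + 9546255*u^4
        - 4776408*u^5 + 1487889*u^6 - 406782*u^7 + 143856*u^8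
        - 32238*u^9 + 1593*u^10 - 180*u^11 - 4*u^12 ≠ 0 := by
  intro u h0 h1
  have hv : (0:ℝ) < 1 - u := by linarith
  have key : 531441 - 3188646*u + 8148762*u^2 - 11455506*u^3 + 9546255*u^4
        - 4776408*u^5 + 1487889*u^6 - 406782*u^7 + 143856*u^8
        - 32238*u^9 + 1593*u^10 - 180*u^11 - 4*u^12
      = 531441*(1-u)^12 + 3188646*u^1*(1-u)^11 + 8148762*u^2*(1-u)^10
        + 11573604*u^3*(1-u)^9 + 10077696*u^4*(1-u)^8 + 5694948*u^5*(1-u)^7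
        + 2222721*u^6*(1-u)^6 + 647352*u^7*(1-u)^5 + 148230*u^8*(1-u)^4
        + 28512*u^9*(1-u)^3 + 4752*u^10*(1-u)^2 + 576*u^11*(1-u)^1
        + 32*u^12 := by ring
  rw [key]
  positivity
end

section
/- For every D in the open interval (-1/2, 0), the quartic polynomial P(x;D) = -1 - 4Dx - 2D(2D-1)x^2 - 2D(1+D+2D^2)x^3 + D^2(1+2D)x^4 satisfies P(w;D) < 0 for all w in the interval (w*(D), 0), where w*(D) = (-D + sqrt(-D(1+D)))/(D(1+2D)). -/
/-- For `D ∈ (-1/2,0)`, the quartic `P(x;D)` is negative on `(w*(D), 0)`. -/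
theorem stmt_1 :
    ∀ D : ℝ, -1/2 < D → D < 0 →
      ∀ w : ℝ,
        (-D + Real.sqrt (-D*(1+D))) / (D*(1+2*D)) < w → w < 0 →
        -1 - 4*D*w - 2*D*(2*D-1)*w^2 - 2*D*(1+D+2*D^2)*w^3
          + D^2*(1+2*D)*w^4 < 0 := by
  intro D hD1 hD2 w hw1 hw2
  have hDpos : 0 < -D*(1+D) := by nlinarith
  set s := Real.sqrt (-D*(1+D)) with hs
  have hs2 : s^2 = -D*(1+D) := Real.sq_sqrt hDpos.le
  have hspos : 0 < s := Real.sqrt_pos.mpr hDpos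
  have ha : D*(1+2*D) < 0 := by nlinarith
  have hsD : 0 < s + D := by nlinarith [hs2, hspos]
  have h1 : w * (D*(1+2*D)) < -D + s := (div_lt_iff_of_neg ha).mp hw1
  have hawpos : 0 < D*(1+2*D)*w := mul_pos_of_neg_of_neg ha hw2
  have hA : 0 < D*(1+2*D)*w + D + s := by linarith
  have hB : D*(1+2*D)*w + D - s < 0 := by nlinarith [h1]
  have haQ : D*(1+2*D) * (D*(1+2*D)*w^2 + 2*D*w + 1) < 0 := by
    nlinarith [mul_neg_of_neg_of_pos hB hA, hs2]
  have hQ : 0 < D*(1+2*D)*w^2 + 2*D*w + 1 := by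
    by_contra h
    push_neg at h
    nlinarith
  have hw2sq : 0 < w^2 := by rw [sq]; exact mul_pos_of_neg_of_neg hw2 hw2
  have hC : 0 < (D*(1+2*D)*w^2 + 2*D*w + 1) + 1 - w := by linarith
  have hcoef : 2*D*(1+D) < 0 := by nlinarith
  have hterm : 2*D*(1+D) * (w^2 * ((D*(1+2*D)*w^2 + 2*D*w + 1) + 1 - w)) < 0 :=
    mul_neg_of_neg_of_pos hcoef (mul_pos hw2sq hC)
  nlinarith [hterm, sq_nonneg (D*(1+2*D)*w^2 + 2*D*w + 1)]
end

section
/- Let Q₁(u,w) = u³(1-w)² + w³(1-u)² and let Q₂(u,w) = -9u(u-3)³ + 3(81-270u+180u²-36u³+5u⁴)w + (-243+540u-270u²+18u³-5u⁴)w² - (u+3)(-27+45u-21u²+u³)w³ - (u-1)(-9+6u+u²)w⁴. Then the resultant of Q₁ and Q₂ with respect to w equals 32(u-1)³u⁶R(u), where R(u) = 531441 - 3188646u + 8148762u² - 11455506u³ + 9546255u⁴ - 4776408u⁵ + 1487889u⁶ - 406782u⁷ + 143856u⁸ - 32238u⁹ + 1593u¹⁰ - 180u¹¹ - 4u¹².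 -/
/-- `Q₁(u,w) = u³(1-w)² + w³(1-u)²` viewed as a polynomial of degree `3` in
`w` has descending coefficients `(1-u)², u³, -2u³, u³`, and
`Q₂(u,w)` has degree `4` in `w` with descending coefficients
`-(u-1)(-9+6u+u²), -(u+3)(-27+45u-21u²+u³), -243+540u-270u²+18u³-5u⁴,
3(81-270u+180u²-36u³+5u⁴), -9u(u-3)³`.  Their resultant with respect to `w`
is the determinant of the `7×7` Sylvester matrix below. -/
noncomputable def resQ₁Q₂ (u : ℝ) : ℝ :=
  Matrix.det
    !![(1-u)^2, u^3, -2*u^3, u^3, 0, 0, 0;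
       0, (1-u)^2, u^3, -2*u^3, u^3, 0, 0;
       0, 0, (1-u)^2, u^3, -2*u^3, u^3, 0;
       0, 0, 0, (1-u)^2, u^3, -2*u^3, u^3;
       -(u-1)*(-9+6*u+u^2), -(u+3)*(-27+45*u-21*u^2+u^3),
         -243+540*u-270*u^2+18*u^3-5*u^4,
         3*(81-270*u+180*u^2-36*u^3+5*u^4), -9*u*(u-3)^3, 0, 0;
       0, -(u-1)*(-9+6*u+u^2), -(u+3)*(-27+45*u-21*u^2+u^3),
         -243+540*u-270*u^2+18*u^3-5*u^4,
         3*(81-270*u+180*u^2-36*u^3+5*u^4), -9*u*(u-3)^3, 0;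
       0, 0, -(u-1)*(-9+6*u+u^2), -(u+3)*(-27+45*u-21*u^2+u^3),
         -243+540*u-270*u^2+18*u^3-5*u^4,
         3*(81-270*u+180*u^2-36*u^3+5*u^4), -9*u*(u-3)^3]

/-- `Res(Q₁,Q₂,w) = 32(u-1)³u⁶ R(u)`. -/
theorem stmt_15 :
    ∀ u : ℝ, resQ₁Q₂ u =
      32*(u-1)^3*u^6 *
        (531441 - 3188646*u + 8148762*u^2 - 11455506*u^3 + 9546255*u^4
          - 4776408*u^5 + 1487889*u^6 - 406782*u^7 + 143856*u^8
          - 32238*u^9 + 1593*u^10 - 180*u^11 - 4*u^12) := by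
  intro u
  -- `mul_zero`/`zero_mul` prune the Laplace expansion at the zeros of the Sylvester matrix
  -- as it unfolds, so `ring` only sees the surviving terms.
  simp only [resQ₁Q₂, Matrix.det_succ_row_zero, Matrix.det_unique, Fin.sum_univ_succ,
    Fin.succAbove, Matrix.submatrix_apply, Matrix.of_apply, Matrix.cons_val, Fin.reduceSucc,
    Fin.default_eq_zero, Fin.reduceCastSucc, Fin.reduceLT, ↓reduceIte, Finset.univ_unique,
    Finset.sum_singleton, Fin.coe_ofNat_eq_mod, mul_zero, zero_mul, add_zero]
  ring
end

section
/- For D = -1/3 and all (u,w) with 0 < u < 1 and w < 0, the system u(1-u)^{-2/3} + w(1-w)^{-2/3} = 0 and F₂(u,w) = 0 has no solutions, where F₂(u,w) = (1-u)(1 - (2/3)u - (1/9)u²)/(u(1-u/3)³) + (1-w)(1 - (2/3)w - (1/9)w²)/(w(1-w/3)³). -/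
/-!
Cubing `F₁ = 0` gives the polynomial relation `u³(1-w)² + w³(1-u)² = 0`, which is rationally
parametrised by `m = ((1-w)/(1-u))^(1/3) > 1`: then `-w = m²u` and `1-w = m³(1-u)`.
Writing `m = 1 + x` with `x > 0`, the sum `F₂(u,w)` becomes a rational function of `x` whose
numerator and denominator have only positive coefficients, so `F₂ > 0` on `Γ₁`.
-/

open Real

noncomputable def F₂Summand (u : ℝ) : ℝ :=
  (1-u) * (1 - (2/3)*u - (1/9)*u^2) / (u * (1 - u/3)^3)

lemma rpow_neg_two_div_three_pow_three {a : ℝ} (ha : 0 ≤ a) :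
    (a ^ (-(2:ℝ)/3)) ^ 3 = (a ^ 2)⁻¹ := by
  rw [← rpow_natCast, ← rpow_mul ha]
  norm_num

lemma cube_relation_of_F₁_eq_zero {u w : ℝ} (hu1 : u < 1) (hw1 : w < 1)
    (h : u * (1-u) ^ (-(2:ℝ)/3) + w * (1-w) ^ (-(2:ℝ)/3) = 0) :
    u^3 * (1-w)^2 + w^3 * (1-u)^2 = 0 := by
  have hu' : 0 < 1 - u := by linarith
  have hw' : 0 < 1 - w := by linarith
  have hcube : (u * (1-u) ^ (-(2:ℝ)/3)) ^ 3 = (-(w * (1-w) ^ (-(2:ℝ)/3))) ^ 3 := by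
    rw [eq_neg_of_add_eq_zero_left h]
  rw [neg_pow, mul_pow, mul_pow, rpow_neg_two_div_three_pow_three hu'.le,
    rpow_neg_two_div_three_pow_three hw'.le] at hcube
  field_simp at hcube
  linear_combination hcube

lemma exists_pos_param_of_cube_relation {u w : ℝ} (hu : 0 < u) (hu1 : u < 1) (hw : w < 0)
    (h : u^3 * (1-w)^2 + w^3 * (1-u)^2 = 0) :
    ∃ x > 0, u = x * (3 + 3*x + x^2) / ((1+x)^2 * (2+x)) ∧ w = -(x * (3 + 3*x + x^2)) / (2+x) := by
  have hden : (-w) * (1-u) ≠ 0 := by nlinarith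
  -- by the cube relation, `m³ = (1-w)/(1-u)`
  set m := u * (1-w) / ((-w) * (1-u)) with hm
  have hm0 : 0 < m := div_pos (by nlinarith) (by nlinarith)
  have hmw : m^2 * u = -w := by
    rw [hm, div_pow, div_mul_eq_mul_div, div_eq_iff (pow_ne_zero 2 hden)]
    linear_combination h
  have hmu : m^3 * (1-u) = 1-w := by
    rw [hm, div_pow, div_mul_eq_mul_div, div_eq_iff (pow_ne_zero 3 hden)]
    linear_combination ((1-u)*(1-w)) * h
  clear_value m
  have hm1 : 1 < m := by
    by_contra! hc
    nlinarith [pow_le_one₀ (n := 3) hm0.le hc]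
  refine ⟨m - 1, by linarith, ?_, ?_⟩
  · rw [eq_div_iff (by positivity)]
    linear_combination hmw - hmu
  · rw [eq_div_iff (by positivity)]
    linear_combination m * hmw + hmu

lemma F₂Summand_div {a b : ℝ} (ha : a ≠ 0) (hb : b ≠ 0) (hab : 3*b - a ≠ 0) :
    F₂Summand (a / b) = 3 * b * (b - a) * (9*b^2 - 6*a*b - a^2) / (a * (3*b - a)^3) := by
  have h : 1 - a / b / 3 = (3*b - a) / (3*b) := by field_simp
  rw [F₂Summand, h, div_eq_div_iff (by positivity) (by positivity)]
  field_simp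
  ring

lemma F₂Summand_param_add_pos {x : ℝ} (hx : 0 < x) :
    0 < F₂Summand (x * (3 + 3*x + x^2) / ((1+x)^2 * (2+x)))
      + F₂Summand (-(x * (3 + 3*x + x^2)) / (2+x)) := by
  suffices h : F₂Summand (x * (3 + 3*x + x^2) / ((1+x)^2 * (2+x)))
      + F₂Summand (-(x * (3 + 3*x + x^2)) / (2+x)) =
      3 * (1+x) * (2+x) * (2 + 2*x + x^2) * x^2
        * (10368 + 67392*x + 204768*x^2 + 384912*x^3 + 498744*x^4 + 469476*x^5 + 329472*x^6
          + 174024*x^7 + 68958*x^8 + 20187*x^9 + 4236*x^10 + 603*x^11 + 52*x^12 + 2*x^13)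
        / ((3 + 3*x + x^2) * (6 + 12*x + 9*x^2 + 2*x^3)^3 * (6 + 6*x + 3*x^2 + x^3)^3) by
    rw [h]; positivity
  have ha : x * (3 + 3*x + x^2) ≠ 0 := by positivity
  have h3u : 3 * ((1+x)^2 * (2+x)) - x * (3 + 3*x + x^2) = 6 + 12*x + 9*x^2 + 2*x^3 := by ring
  have h3w : 3 * (2+x) - -(x * (3 + 3*x + x^2)) = 6 + 6*x + 3*x^2 + x^3 := by ring
  rw [F₂Summand_div ha (by positivity) (by rw [h3u]; positivity),
    F₂Summand_div (neg_ne_zero.2 ha) (by positivity) (by rw [h3w]; positivity), h3u, h3w,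
    div_add_div _ _ (by positivity) (mul_ne_zero (neg_ne_zero.2 ha) (by positivity)),
    div_eq_div_iff (mul_ne_zero (by positivity) (mul_ne_zero (neg_ne_zero.2 ha) (by positivity)))
      (by positivity)]
  ring

/-- For `D = -1/3` the curves `F₁ = 0` and `F₂ = 0` do not intersect for
`0 < u < 1`, `w < 0`. -/
theorem stmt_16 :
    ∀ u w : ℝ, 0 < u → u < 1 → w < 0 →
      ¬ (u * (1-u) ^ (-(2:ℝ)/3) + w * (1-w) ^ (-(2:ℝ)/3) = 0 ∧
        (1-u) * (1 - (2/3)*u - (1/9)*u^2) / (u * (1 - u/3)^3)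
          + (1-w) * (1 - (2/3)*w - (1/9)*w^2) / (w * (1 - w/3)^3) = 0) := by
  rintro u w hu hu1 hw ⟨hF₁, hF₂⟩
  obtain ⟨x, hx, rfl, rfl⟩ :=
    exists_pos_param_of_cube_relation hu hu1 hw (cube_relation_of_F₁_eq_zero hu1 (by linarith) hF₁)
  exact (F₂Summand_param_add_pos hx).ne' hF₂
end
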